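/- Assume Φ satisfies ESC (constants α̲ ≤ ᾱ), UCC (constant θ), NEQ (constant ε, with centers x^{(n)} ∈ J_n ∩ X_ε), BDP (constant K, with its ball-inclusion consequence φ_ω^n(B(x,r)) ⊇ B(φ_ω^n(x), K^{-1}‖Dφ_ω^n‖r) for balls B(x,r) ⊆ X), and diam(X) ≤ 1, and let μ_h be an h-Ahlfors measure with constant C and supp(μ_h) = J. Then there exists N ∈ ℕ such that: for all n and all m ≥ max(N, θ^{-1}[log 2 + n(ᾱ + θ)]), and every ω ∈ I^n with e^{-S_nβ(ωξ^{(n)})} ≤ 2, the number of τ ∈ I^m with B_τ ⊆ B_ω is at least C^{-2}·(e^{-S_nβ(ωξ^{(n)})}/(2κ̄_m))^h. -/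

import Mathlib

open Set Metric MeasureTheory Filter

noncomputable section

/-- Points of Euclidean space `ℝ^d`. -/
abbrev Pt (d : ℕ) : Type := EuclideanSpace ℝ (Fin d)

/-- A nonautonomous conformal iterated function system on a compact convex set
`X ⊆ ℝ^d` with nonempty interior, contained in a bounded open connected set `V`.
`I n` is the (finite, nonempty) alphabet at level `n` (0-indexed version of `I^{(n+1)}`),
`φ n e` the corresponding injective conformal contraction, whose derivative at every
point of `V` is a similarity with (positive) scaling factor `D n e x`. -/
structure NCIFS (d : ℕ) (E : Type) [DecidableEq E] : Type where
  X : Set (Pt d)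
  V : Set (Pt d)
  compactX : IsCompact X
  convexX : Convex ℝ X
  intX : (interior X).Nonempty
  XsubV : X ⊆ V
  openV : IsOpen V
  bddV : Bornology.IsBounded V
  connV : IsConnected V
  I : ℕ → Finset E
  Ine : ∀ n, (I n).Nonempty
  φ : ℕ → E → Pt d → Pt d
  D : ℕ → E → Pt d → ℝ
  Dpos : ∀ n e, e ∈ I n → ∀ x ∈ V, 0 < D n e x
  mapsV : ∀ n e, e ∈ I n → Set.MapsTo (φ n e) V V
  mapsX : ∀ n e, e ∈ I n → Set.MapsTo (φ n e) X X
  injV : ∀ n e, e ∈ I n → Set.InjOn (φ n e) V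
  conformal : ∀ n e, e ∈ I n → ∀ x ∈ V,
    ∃ A : Pt d →L[ℝ] Pt d, HasFDerivAt (φ n e) A x ∧ ∀ v, ‖A v‖ = D n e x * ‖v‖
  contractX : ∀ n e, e ∈ I n → ∀ x ∈ X, D n e x < 1

/-- Extension of a finite word to an infinite sequence (values beyond the word
are an arbitrary fixed element; they are never used). -/
def wext {E : Type} [Nonempty E] {q : ℕ} (ω : Fin q → E) : ℕ → E :=
  fun j => if h : j < q then ω ⟨j, h⟩ else Classical.arbitrary E

/-- Concatenation `ωξ` of a finite word `ω` of length `n` with an infinite tail `ξ`. -/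
def wcat {E : Type} {n : ℕ} (ω : Fin n → E) (ξ : ℕ → E) : ℕ → E :=
  fun j => if h : j < n then ω ⟨j, h⟩ else ξ (j - n)

namespace NCIFS

variable {d : ℕ} {E : Type} [DecidableEq E]

/-- The finite words occupying levels `m, m+1, …, m+q-1`. -/
def words (S : NCIFS d E) (m q : ℕ) : Finset (Fin q → E) :=
  Fintype.piFinset fun k => S.I (m + (k : ℕ))

/-- The composition `φ_{ξ 0}^{(m)} ∘ φ_{ξ 1}^{(m+1)} ∘ ⋯ ∘ φ_{ξ (q-1)}^{(m+q-1)}`. -/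
def comp (S : NCIFS d E) : ℕ → ℕ → (ℕ → E) → Pt d → Pt d
  | _, 0, _ => id
  | m, q + 1, ξ => S.φ m (ξ 0) ∘ S.comp (m + 1) q (fun j => ξ (j + 1))

/-- The scaling factor `|Dφ_ξ^{(m,…,m+q-1)}(x)|` of the composition, via the chain rule. -/
def Dw (S : NCIFS d E) : ℕ → ℕ → (ℕ → E) → Pt d → ℝ
  | _, 0, _, _ => 1
  | m, q + 1, ξ, x =>
      S.D m (ξ 0) (S.comp (m + 1) q (fun j => ξ (j + 1)) x) *
        S.Dw (m + 1) q (fun j => ξ (j + 1)) x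

/-- `‖Dφ_ξ‖ = sup_{x ∈ X} |Dφ_ξ(x)|`. -/
def normDw (S : NCIFS d E) (m q : ℕ) (ξ : ℕ → E) : ℝ :=
  sSup {r | ∃ x ∈ S.X, r = S.Dw m q ξ x}

/-- `κ̲_{(n)}`: minimum over `j ∈ I^{(n)}` and `x ∈ X` of `|Dφ_j^{(n)}(x)|`. -/
def kminLv (S : NCIFS d E) (n : ℕ) : ℝ :=
  sInf {r | ∃ e ∈ S.I n, ∃ x ∈ S.X, r = S.D n e x}

/-- `κ̄_{(n)}`: maximum over `j ∈ I^{(n)}` and `x ∈ X` of `|Dφ_j^{(n)}(x)|`. -/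
def kmaxLv (S : NCIFS d E) (n : ℕ) : ℝ :=
  sSup {r | ∃ e ∈ S.I n, ∃ x ∈ S.X, r = S.D n e x}

/-- `κ̲_n`: minimum over words `ω ∈ I^n` and `x ∈ X` of `|Dφ_ω^n(x)|`. -/
def kmin [Nonempty E] (S : NCIFS d E) (n : ℕ) : ℝ :=
  sInf {r | ∃ ω ∈ S.words 0 n, ∃ x ∈ S.X, r = S.Dw 0 n (wext ω) x}

/-- `κ̄_n`: maximum over words `ω ∈ I^n` and `x ∈ X` of `|Dφ_ω^n(x)|`. -/
def kmax [Nonempty E] (S : NCIFS d E) (n : ℕ) : ℝ :=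
  sSup {r | ∃ ω ∈ S.words 0 n, ∃ x ∈ S.X, r = S.Dw 0 n (wext ω) x}

/-- The partition function `Z_n(t) = Σ_{ω ∈ I^n} ‖Dφ_ω^n‖^t`. -/
def Z [Nonempty E] (S : NCIFS d E) (n : ℕ) (t : ℝ) : ℝ :=
  ∑ ω ∈ S.words 0 n, (S.normDw 0 n (wext ω)) ^ t

/-- `‖Dφ_e^{(n)}‖`. -/
def normLv (S : NCIFS d E) (n : ℕ) (e : E) : ℝ :=
  sSup {r | ∃ x ∈ S.X, r = S.D n e x}

/-- `ρ_n = max_{a,b ∈ I^{(n)}} ‖Dφ_a^{(n)}‖ / ‖Dφ_b^{(n)}‖`. -/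
def ρ (S : NCIFS d E) (n : ℕ) : ℝ :=
  sSup {r | ∃ a ∈ S.I n, ∃ b ∈ S.I n, r = S.normLv n a / S.normLv n b}

/-- `min_{a ∈ I^{(n)}} ‖Dφ_a^{(n)}‖`. -/
def minNormLv (S : NCIFS d E) (n : ℕ) : ℝ :=
  sInf {r | ∃ e ∈ S.I n, r = S.normLv n e}

/-- The limit set `J = ⋂_{n ≥ 1} ⋃_{ω ∈ I^n} φ_ω^n(X)`. -/
def limitSet [Nonempty E] (S : NCIFS d E) : Set (Pt d) :=
  ⋂ n ∈ Set.Ici 1, ⋃ ω ∈ S.words 0 n, S.comp 0 n (wext ω) '' S.X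

/-- `J_n = π_n(I^{(n+1,∞)})`: points lying in the nested intersection
`⋂_k φ_ξ^{(n,…,n+k-1)}(X)` for some admissible tail `ξ`. -/
def Jlv (S : NCIFS d E) (n : ℕ) : Set (Pt d) :=
  {x | ∃ ξ : ℕ → E, (∀ j, ξ j ∈ S.I (n + j)) ∧ ∀ k, x ∈ S.comp n k ξ '' S.X}

/-- `X_ε = X \ B(ℝ^d \ X, ε)`. -/
def Xeps (S : NCIFS d E) (ε : ℝ) : Set (Pt d) :=
  S.X \ ⋃ y ∈ S.Xᶜ, Metric.ball y ε

/-- Open set condition. -/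
def OSC (S : NCIFS d E) : Prop :=
  ∀ n, ∀ i ∈ S.I n, ∀ j ∈ S.I n, i ≠ j →
    S.φ n i '' interior S.X ∩ S.φ n j '' interior S.X = ∅

/-- Uniformly contracting condition with constant `θ`. -/
def UCC (S : NCIFS d E) (θ : ℝ) : Prop :=
  0 < θ ∧ ∀ n, S.kmaxLv n ≤ Real.exp (-θ)

/-- Bounded distortion property with constant `K`. -/
def BDP [Nonempty E] (S : NCIFS d E) (K : ℝ) : Prop :=
  1 ≤ K ∧ ∀ n, ∀ ω ∈ S.words 0 n, ∀ x ∈ S.X, ∀ y ∈ S.X,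
    S.Dw 0 n (wext ω) x ≤ K * S.Dw 0 n (wext ω) y

/-- Non-empty quasi middle condition with constant `ε`. -/
def NEQ (S : NCIFS d E) (ε : ℝ) : Prop :=
  0 < ε ∧ ∀ n, (S.Jlv n ∩ S.Xeps ε).Nonempty

end NCIFS

/-- The (topological) support of a measure: points all of whose balls have positive measure. -/
def msupp {d : ℕ} (μ : Measure (Pt d)) : Set (Pt d) :=
  {x | ∀ r : ℝ, 0 < r → 0 < μ (Metric.ball x r)}

/-- `μ` is `h`-Ahlfors regular with constant `C`. -/
def Ahlfors {d : ℕ} (μ : Measure (Pt d)) (h C : ℝ) : Prop :=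
  1 ≤ C ∧ ∀ x ∈ msupp μ, ∀ r : ℝ, 0 < r → r ≤ 1 →
    ENNReal.ofReal (C⁻¹ * r ^ h) ≤ μ (Metric.ball x r) ∧
      μ (Metric.ball x r) ≤ ENNReal.ofReal (C * r ^ h)

/-- Shrinking-target data for a nonautonomous conformal IFS: the functions `β_n`
(positive on admissible tails), fixed admissible tails `ξ^{(n)}` and centers `x^{(n)} ∈ X`. -/
structure STData {d : ℕ} {E : Type} [DecidableEq E] (S : NCIFS d E) : Type where
  β : ℕ → (ℕ → E) → ℝ
  βpos : ∀ n ξ, (∀ j, ξ j ∈ S.I (n + j)) → 0 < β n ξ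
  ξt : ℕ → ℕ → E
  ξtmem : ∀ n j, ξt n j ∈ S.I (n + j)
  xc : ℕ → Pt d
  xcX : ∀ n, xc n ∈ S.X

namespace STData

variable {d : ℕ} {E : Type} [DecidableEq E] {S : NCIFS d E}

/-- The Birkhoff-type sum `S_nβ(ξ) = Σ_{k<n} β_k(σ^k ξ)`. -/
def Snβ (T : STData S) (n : ℕ) (ξ : ℕ → E) : ℝ :=
  ∑ k ∈ Finset.range n, T.β k (fun j => ξ (k + j))

/-- The radius `e^{-S_nβ(ωξ^{(n)})}` of the shrinking target `B_ω`. -/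
def radius (T : STData S) {n : ℕ} (ω : Fin n → E) : ℝ :=
  Real.exp (-(T.Snβ n (wcat ω (T.ξt n))))

/-- The shrinking target `B_ω = B(φ_ω^n(x^{(n)}), e^{-S_nβ(ωξ^{(n)})})`. -/
def tball [Nonempty E] (T : STData S) (n : ℕ) (ω : Fin n → E) : Set (Pt d) :=
  Metric.ball (S.comp 0 n (wext ω) (T.xc n)) (T.radius ω)

/-- The shrinking-target set `𝒟 = ⋂_{N≥1} ⋃_{n≥N} ⋃_{ω ∈ I^n} B_ω`. -/
def target [Nonempty E] (T : STData S) : Set (Pt d) :=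
  ⋂ N ∈ Set.Ici 1, ⋃ n ∈ Set.Ici N, ⋃ ω ∈ S.words 0 n, T.tball n ω

/-- The upper pressure `P̄_β(t)`. -/
def upperP (T : STData S) (t : ℝ) : ℝ :=
  Filter.limsup (fun n : ℕ =>
    (1 / (n : ℝ)) *
      Real.log (∑ ω ∈ S.words 0 n, Real.exp (-t * T.Snβ n (wcat ω (T.ξt n)))))
    Filter.atTop

/-- The lower pressure `P̲_β(t)`. -/
def lowerP (T : STData S) (t : ℝ) : ℝ :=
  Filter.liminf (fun n : ℕ =>
    (1 / (n : ℝ)) *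
      Real.log (∑ ω ∈ S.words 0 n, Real.exp (-t * T.Snβ n (wcat ω (T.ξt n)))))
    Filter.atTop

/-- The Bowen parameter `b = inf {t ≥ 0 : P̄_β(t) < 0}`. -/
def bowen (T : STData S) : ℝ := sInf {t : ℝ | 0 ≤ t ∧ T.upperP t < 0}

/-- `β` is tame: the upper pressure is strictly decreasing. -/
def tame (T : STData S) : Prop := StrictAntiOn T.upperP (Set.Ici 0)

/-- Exponentially shrinking condition with constants `al ≤ au`. -/
def ESC (T : STData S) (al au : ℝ) : Prop :=
  0 < al ∧ al ≤ au ∧ ∀ k, ∀ ξ : ℕ → E, (∀ j, ξ j ∈ S.I (k + j)) →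
    al ≤ T.β k ξ + Real.log (S.kminLv k) ∧ T.β k ξ + Real.log (S.kmaxLv k) ≤ au

/-- Linear variation condition. -/
def LVC (T : STData S) : Prop :=
  Filter.Tendsto (fun n : ℕ =>
    (1 / (n : ℝ)) *
      (sSup {r | ∃ ξ : ℕ → E, (∀ j, ξ j ∈ S.I j) ∧ r = T.Snβ n ξ} -
        sInf {r | ∃ ξ : ℕ → E, (∀ j, ξ j ∈ S.I j) ∧ r = T.Snβ n ξ}))
    Filter.atTop (nhds 0)

end STData

/-! Let `r` be the radius of `B_ω` and `c` its centre, a point of `J = supp μ`, so Ahlfors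
regularity gives `μ(B(c, r/2)) ≥ C⁻¹ (r/2)^h`. The level-`m` cylinders `φ_τ(X)` cover `J`,
have diameter at most `κ̄_m < 1` and are centred on `J`, so each has measure at most
`C κ̄_m^h`; hence at least `C⁻² (r / 2κ̄_m)^h` of them meet `B(c, r/2)`. ESC and UCC turn the
lower bound on `m` into `2κ̄_m ≤ r`, so each of these cylinders lies in `B_ω`. Finally,
for `m ≥ N` ESC and BDP make the radius of `B_τ` at most `K⁻¹ ‖Dφ_τ‖ ε`, and since `x^{(m)}`
lies `ε`-deep inside `X` the ball-inclusion property puts `B_τ` inside `φ_τ(X)`. -/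

namespace NCIFS

variable {d : ℕ} {E : Type} [DecidableEq E]

def Admissible (S : NCIFS d E) (m q : ℕ) (ξ : ℕ → E) : Prop :=
  ∀ j < q, ξ j ∈ S.I (m + j)

variable {S : NCIFS d E}

lemma Admissible.head {m q : ℕ} {ξ : ℕ → E} (h : S.Admissible m (q + 1) ξ) :
    ξ 0 ∈ S.I m :=
  h 0 q.succ_pos

lemma Admissible.tail {m q : ℕ} {ξ : ℕ → E} (h : S.Admissible m (q + 1) ξ) :
    S.Admissible (m + 1) q (fun j => ξ (j + 1)) := fun j hj => by
  rw [Nat.add_right_comm, Nat.add_assoc]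
  exact h (j + 1) (by omega)

lemma Admissible.shift {m p q : ℕ} {ξ : ℕ → E} (h : S.Admissible m (p + q) ξ) :
    S.Admissible (m + p) q (fun j => ξ (p + j)) := fun j hj => by
  rw [Nat.add_assoc]
  exact h (p + j) (by omega)

lemma comp_congr {m q : ℕ} {ξ ξ' : ℕ → E} (h : ∀ j < q, ξ j = ξ' j) :
    S.comp m q ξ = S.comp m q ξ' := by
  induction q generalizing m ξ ξ' with
  | zero => rfl
  | succ q ih =>
    simp only [comp, h 0 q.succ_pos, ih fun j hj => h (j + 1) (by omega)]

lemma comp_add (m p q : ℕ) (ξ : ℕ → E) :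
    S.comp m (p + q) ξ = S.comp m p ξ ∘ S.comp (m + p) q (fun j => ξ (p + j)) := by
  induction p generalizing m ξ with
  | zero => simp [comp]
  | succ p ih =>
    rw [Nat.add_right_comm]
    simp only [comp, ih, Function.comp_assoc, Nat.add_right_comm _ 1]
    rfl

lemma Dw_add (m p q : ℕ) (ξ : ℕ → E) (x : Pt d) :
    S.Dw m (p + q) ξ x = S.Dw m p ξ (S.comp (m + p) q (fun j => ξ (p + j)) x) *
      S.Dw (m + p) q (fun j => ξ (p + j)) x := by
  induction p generalizing m ξ with
  | zero => simp [Dw]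
  | succ p ih =>
    rw [Nat.add_right_comm]
    simp only [Dw, ih, comp_add, Function.comp_apply, Nat.add_right_comm _ 1, mul_assoc]
    rfl

lemma comp_mapsTo {A : Set (Pt d)} (hA : ∀ n, ∀ e ∈ S.I n, MapsTo (S.φ n e) A A)
    {m q : ℕ} {ξ : ℕ → E} (hξ : S.Admissible m q ξ) : MapsTo (S.comp m q ξ) A A := by
  induction q generalizing m ξ with
  | zero => exact mapsTo_id A
  | succ q ih => exact (hA m _ hξ.head).comp (ih hξ.tail)

lemma Dw_pos {m q : ℕ} {ξ : ℕ → E} (hξ : S.Admissible m q ξ) {x : Pt d} (hx : x ∈ S.X) :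
    0 < S.Dw m q ξ x := by
  induction q generalizing m ξ with
  | zero => exact one_pos
  | succ q ih =>
    exact mul_pos (S.Dpos m _ hξ.head _ (S.XsubV (comp_mapsTo S.mapsX hξ.tail hx)))
      (ih hξ.tail)

lemma Dw_le_one {m q : ℕ} {ξ : ℕ → E} (hξ : S.Admissible m q ξ) {x : Pt d}
    (hx : x ∈ S.X) : S.Dw m q ξ x ≤ 1 := by
  induction q generalizing m ξ with
  | zero => exact le_rfl
  | succ q ih =>
    exact mul_le_one₀ (S.contractX m _ hξ.head _ (comp_mapsTo S.mapsX hξ.tail hx)).le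
      (Dw_pos hξ.tail hx).le (ih hξ.tail)

lemma comp_hasFDerivAt {m q : ℕ} {ξ : ℕ → E} (hξ : S.Admissible m q ξ) {x : Pt d}
    (hx : x ∈ S.V) : ∃ A : Pt d →L[ℝ] Pt d, HasFDerivAt (S.comp m q ξ) A x ∧
      ∀ v, ‖A v‖ = S.Dw m q ξ x * ‖v‖ := by
  induction q generalizing m ξ with
  | zero => exact ⟨ContinuousLinearMap.id ℝ (Pt d), hasFDerivAt_id x, by simp [Dw]⟩
  | succ q ih =>
    obtain ⟨B, hB, hBv⟩ := ih hξ.tail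
    obtain ⟨A, hA, hAv⟩ := S.conformal m _ hξ.head _ (comp_mapsTo S.mapsV hξ.tail hx)
    exact ⟨A.comp B, hA.comp x hB, fun v => by
      simp only [ContinuousLinearMap.comp_apply, hAv, hBv, Dw, mul_assoc]⟩

lemma dist_comp_le {m q : ℕ} {ξ : ℕ → E} (hξ : S.Admissible m q ξ) {L : ℝ}
    (hL : ∀ z ∈ S.X, S.Dw m q ξ z ≤ L) {x y : Pt d} (hx : x ∈ S.X) (hy : y ∈ S.X) :
    dist (S.comp m q ξ x) (S.comp m q ξ y) ≤ L * dist x y := by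
  have hderiv : ∀ z ∈ S.X, ∃ A : Pt d →L[ℝ] Pt d, HasFDerivAt (S.comp m q ξ) A z ∧
      ∀ v, ‖A v‖ = S.Dw m q ξ z * ‖v‖ := fun z hz => comp_hasFDerivAt hξ (S.XsubV hz)
  have hbound : ∀ z ∈ S.X, ‖fderiv ℝ (S.comp m q ξ) z‖ ≤ L := fun z hz => by
    obtain ⟨A, hA, hAv⟩ := hderiv z hz
    rw [hA.fderiv]
    refine ContinuousLinearMap.opNorm_le_bound _ ((Dw_pos hξ hz).le.trans (hL z hz))
      fun v => ?_
    rw [hAv]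
    exact mul_le_mul_of_nonneg_right (hL z hz) (norm_nonneg v)
  simpa only [dist_eq_norm] using S.convexX.norm_image_sub_le_of_norm_fderiv_le
    (fun z hz => (hderiv z hz).choose_spec.1.differentiableAt) hbound hy hx

variable (S) in
lemma X_nonempty : S.X.Nonempty := S.intX.mono interior_subset

lemma D_le_kmaxLv {n : ℕ} {e : E} (he : e ∈ S.I n) {x : Pt d} (hx : x ∈ S.X) :
    S.D n e x ≤ S.kmaxLv n :=
  le_csSup ⟨1, fun _ ⟨e, he, x, hx, hr⟩ => hr ▸ (S.contractX n e he x hx).le⟩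
    ⟨e, he, x, hx, rfl⟩

lemma kminLv_le_D {n : ℕ} {e : E} (he : e ∈ S.I n) {x : Pt d} (hx : x ∈ S.X) :
    S.kminLv n ≤ S.D n e x :=
  csInf_le ⟨0, fun _ ⟨e, he, x, hx, hr⟩ => hr ▸ (S.Dpos n e he x (S.XsubV hx)).le⟩
    ⟨e, he, x, hx, rfl⟩

variable (S) in
lemma kmaxLv_pos (n : ℕ) : 0 < S.kmaxLv n := by
  obtain ⟨x, hx⟩ := S.X_nonempty
  obtain ⟨e, he⟩ := S.Ine n
  exact (S.Dpos n e he x (S.XsubV hx)).trans_le (D_le_kmaxLv he hx)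

variable (S) in
lemma kminLv_nonneg (n : ℕ) : 0 ≤ S.kminLv n := by
  obtain ⟨x, hx⟩ := S.X_nonempty
  obtain ⟨e, he⟩ := S.Ine n
  exact le_csInf ⟨_, e, he, x, hx, rfl⟩
    fun _ ⟨e, he, y, hy, hr⟩ => hr ▸ (S.Dpos n e he y (S.XsubV hy)).le

lemma Dw_le_prod_kmaxLv {m q : ℕ} {ξ : ℕ → E} (hξ : S.Admissible m q ξ) {x : Pt d}
    (hx : x ∈ S.X) : S.Dw m q ξ x ≤ ∏ k ∈ Finset.range q, S.kmaxLv (m + k) := by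
  induction q generalizing m ξ with
  | zero => simp [Dw]
  | succ q ih =>
    have ih' := ih hξ.tail
    simp only [Nat.add_right_comm m 1] at ih'
    rw [Finset.prod_range_succ', Nat.add_zero, mul_comm]
    exact mul_le_mul (D_le_kmaxLv hξ.head (comp_mapsTo S.mapsX hξ.tail hx)) ih'
      (Dw_pos hξ.tail hx).le (S.kmaxLv_pos m).le

lemma prod_kminLv_le_Dw {m q : ℕ} {ξ : ℕ → E} (hξ : S.Admissible m q ξ) {x : Pt d}
    (hx : x ∈ S.X) : ∏ k ∈ Finset.range q, S.kminLv (m + k) ≤ S.Dw m q ξ x := by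
  induction q generalizing m ξ with
  | zero => simp [Dw]
  | succ q ih =>
    have ih' := ih hξ.tail
    simp only [Nat.add_right_comm m 1] at ih'
    rw [Finset.prod_range_succ', Nat.add_zero, mul_comm]
    have hD := kminLv_le_D hξ.head (comp_mapsTo S.mapsX hξ.tail hx)
    exact mul_le_mul hD ih' (Finset.prod_nonneg fun k _ => S.kminLv_nonneg _)
      (S.kminLv_nonneg m |>.trans hD)

lemma ball_subset_of_mem_Xeps {ε : ℝ} {x : Pt d} (hx : x ∈ S.Xeps ε) : ball x ε ⊆ S.X :=
  fun u hu => by_contra fun huX => hx.2 (mem_iUnion₂.2 ⟨u, huX, mem_ball_comm.1 hu⟩)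

variable (S) in
lemma words_nonempty (m q : ℕ) : (S.words m q).Nonempty :=
  Fintype.piFinset_nonempty.2 fun _ => S.Ine _

lemma prod_kmaxLv_Ico_le {θ : ℝ} (hUCC : S.UCC θ) (n m : ℕ) :
    ∏ k ∈ Finset.Ico n m, S.kmaxLv k ≤ Real.exp (-θ) ^ (m - n) := by
  calc _ ≤ ∏ _k ∈ Finset.Ico n m, Real.exp (-θ) :=
        Finset.prod_le_prod (fun k _ => (S.kmaxLv_pos k).le) fun k _ => hUCC.2 k
    _ = _ := by rw [Finset.prod_const, Nat.card_Ico]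

variable [Nonempty E]

lemma admissible_wext {m q : ℕ} {ω : Fin q → E} (hω : ω ∈ S.words m q) :
    S.Admissible m q (wext ω) := fun j hj => by
  simpa [wext, hj] using Fintype.mem_piFinset.1 hω ⟨j, hj⟩

lemma inv_mul_Dw_le_D {K : ℝ} (hBDP : S.BDP K) {k : ℕ} {ω : Fin (k + 1) → E}
    (hω : ω ∈ S.words 0 (k + 1)) {x₀ x : Pt d} (hx₀ : x₀ ∈ S.X) (hx : x ∈ S.X) :
    K⁻¹ * S.Dw 0 (k + 1) (wext ω) x₀ ≤ S.D k (ω (Fin.last k)) x := by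
  have hadm := admissible_wext hω
  have hwk : wext ω k = ω (Fin.last k) := by simp [wext, Fin.last]
  have hlast : ω (Fin.last k) ∈ S.I k := hwk ▸ by simpa using hadm k k.lt_succ_self
  have hsplit : S.Dw 0 (k + 1) (wext ω) x ≤ S.D k (ω (Fin.last k)) x := by
    rw [Dw_add]
    simp only [Dw, comp, Nat.zero_add, Nat.add_zero, mul_one, id]
    rw [hwk]
    refine mul_le_of_le_one_left (S.Dpos k _ hlast x (S.XsubV hx)).le (Dw_le_one ?_ ?_)
    · exact fun j hj => hadm j (by omega)
    · exact S.mapsX k _ hlast hx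
  rw [inv_mul_le_iff₀ (one_pos.trans_le hBDP.1)]
  exact (hBDP.2 _ ω hω x₀ hx₀ x hx).trans
    (mul_le_mul_of_nonneg_left hsplit (by linarith [hBDP.1]))

-- `D` is not assumed continuous, so the infimum is kept away from `0` by applying BDP to
-- words of length `k + 1` ending in each letter of level `k`.
lemma kminLv_pos {K : ℝ} (hBDP : S.BDP K) (k : ℕ) : 0 < S.kminLv k := by
  obtain ⟨x₀, hx₀⟩ := S.X_nonempty
  obtain ⟨ω₀, hω₀⟩ := S.words_nonempty 0 k
  have hsnoc : ∀ e ∈ S.I k, (Fin.snoc ω₀ e : Fin (k + 1) → E) ∈ S.words 0 (k + 1) := by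
    intro e he
    refine Fintype.mem_piFinset.2 fun i => Fin.lastCases ?_ (fun j => ?_) i
    · simpa using he
    · simpa using Fintype.mem_piFinset.1 hω₀ j
  let c := (S.I k).inf' (S.Ine k)
    fun e => K⁻¹ * S.Dw 0 (k + 1) (wext (Fin.snoc ω₀ e : Fin (k + 1) → E)) x₀
  have hc : 0 < c := (Finset.lt_inf'_iff _).2 fun e he =>
    mul_pos (inv_pos.2 (one_pos.trans_le hBDP.1)) (Dw_pos (admissible_wext (hsnoc e he)) hx₀)
  obtain ⟨e₀, he₀⟩ := S.Ine k
  refine hc.trans_le (le_csInf ⟨_, e₀, he₀, x₀, hx₀, rfl⟩ ?_)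
  rintro _ ⟨e, he, x, hx, rfl⟩
  have hD := inv_mul_Dw_le_D hBDP (hsnoc e he) hx₀ hx
  rw [Fin.snoc_last] at hD
  exact (Finset.inf'_le _ he).trans hD

lemma Dw_le_kmax {m : ℕ} {τ : Fin m → E} (hτ : τ ∈ S.words 0 m) {x : Pt d}
    (hx : x ∈ S.X) : S.Dw 0 m (wext τ) x ≤ S.kmax m :=
  le_csSup ⟨1, fun _ ⟨_, hσ, _, hy, hr⟩ => hr ▸ Dw_le_one (admissible_wext hσ) hy⟩
    ⟨τ, hτ, x, hx, rfl⟩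

lemma Dw_le_normDw {m : ℕ} {τ : Fin m → E} (hτ : τ ∈ S.words 0 m) {x : Pt d}
    (hx : x ∈ S.X) : S.Dw 0 m (wext τ) x ≤ S.normDw 0 m (wext τ) :=
  le_csSup ⟨1, fun _ ⟨_, hy, hr⟩ => hr ▸ Dw_le_one (admissible_wext hτ) hy⟩
    ⟨x, hx, rfl⟩

variable (S) in
lemma kmax_pos (m : ℕ) : 0 < S.kmax m := by
  obtain ⟨τ, hτ⟩ := S.words_nonempty 0 m
  obtain ⟨x, hx⟩ := S.X_nonempty
  exact (Dw_pos (admissible_wext hτ) hx).trans_le (Dw_le_kmax hτ hx)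

variable (S) in
lemma kmax_le_prod_kmaxLv (m : ℕ) : S.kmax m ≤ ∏ k ∈ Finset.range m, S.kmaxLv k := by
  obtain ⟨τ, hτ⟩ := S.words_nonempty 0 m
  obtain ⟨x, hx⟩ := S.X_nonempty
  refine csSup_le ⟨_, τ, hτ, x, hx, rfl⟩ ?_
  rintro _ ⟨σ, hσ, y, hy, rfl⟩
  simpa using Dw_le_prod_kmaxLv (admissible_wext hσ) hy

lemma dist_comp_le_kmax (hdiam : diam S.X ≤ 1) {m : ℕ} {τ : Fin m → E}
    (hτ : τ ∈ S.words 0 m) {x y : Pt d} (hx : x ∈ S.X) (hy : y ∈ S.X) :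
    dist (S.comp 0 m (wext τ) x) (S.comp 0 m (wext τ) y) ≤ S.kmax m :=
  calc _ ≤ S.kmax m * dist x y :=
        dist_comp_le (admissible_wext hτ) (fun _ hz => Dw_le_kmax hτ hz) hx hy
    _ ≤ S.kmax m * 1 := mul_le_mul_of_nonneg_left
        ((dist_le_diam_of_mem S.compactX.isBounded hx hy).trans hdiam) (S.kmax_pos m).le
    _ = S.kmax m := mul_one _

lemma image_comp_subset_closedBall (hdiam : diam S.X ≤ 1) {m : ℕ} {τ : Fin m → E}
    (hτ : τ ∈ S.words 0 m) {x : Pt d} (hx : x ∈ S.X) :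
    S.comp 0 m (wext τ) '' S.X ⊆ closedBall (S.comp 0 m (wext τ) x) (S.kmax m) := by
  rintro _ ⟨y, hy, rfl⟩
  exact mem_closedBall.2 (dist_comp_le_kmax hdiam hτ hy hx)

lemma image_comp_subset_ball (hdiam : diam S.X ≤ 1) {m : ℕ} {τ : Fin m → E}
    (hτ : τ ∈ S.words 0 m) {c : Pt d} {ρ : ℝ}
    (hmeet : (S.comp 0 m (wext τ) '' S.X ∩ ball c ρ).Nonempty) :
    S.comp 0 m (wext τ) '' S.X ⊆ ball c (S.kmax m + ρ) := by
  obtain ⟨_, ⟨y, hy, rfl⟩, hyc⟩ := hmeet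
  rintro _ ⟨x, hx, rfl⟩
  exact mem_ball.2 <| (dist_triangle _ _ _).trans_lt
    (add_lt_add_of_le_of_lt (dist_comp_le_kmax hdiam hτ hx hy) hyc)

lemma image_comp_subset_cylinder {q : ℕ} {ξ : ℕ → E} (hξ : S.Admissible 0 q ξ) :
    S.comp 0 q ξ '' S.X ⊆ ⋃ ω ∈ S.words 0 q, S.comp 0 q (wext ω) '' S.X := by
  refine subset_iUnion₂_of_subset (fun i : Fin q => ξ i)
    (Fintype.mem_piFinset.2 fun i => hξ i i.2) (subset_of_eq ?_)
  rw [comp_congr (ξ' := wext fun i : Fin q => ξ i) fun j hj => by simp [wext, hj]]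

lemma comp_mem_limitSet {m : ℕ} {τ : Fin m → E} (hτ : τ ∈ S.words 0 m) {x : Pt d}
    (hx : x ∈ S.Jlv m) : S.comp 0 m (wext τ) x ∈ S.limitSet := by
  obtain ⟨ξ, hξ, hxξ⟩ := hx
  have hζ : ∀ q, S.Admissible 0 q (wcat τ ξ) := fun q j _ => by
    by_cases hj : j < m
    · simpa [wcat, hj] using Fintype.mem_piFinset.1 hτ ⟨j, hj⟩
    · simpa [wcat, hj, Nat.add_sub_cancel' (not_lt.1 hj)] using hξ (j - m)
  have hxX : x ∈ S.X := by simpa [comp] using hxξ 0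
  have hcomp : S.comp 0 m (wext τ) = S.comp 0 m (wcat τ ξ) :=
    comp_congr fun j hj => by simp [wext, wcat, hj]
  have hmem : ∀ q, S.comp 0 m (wcat τ ξ) x ∈ S.comp 0 q (wcat τ ξ) '' S.X := by
    intro q
    rcases le_total q m with hqm | hmq
    · obtain ⟨t, rfl⟩ := Nat.exists_eq_add_of_le hqm
      rw [comp_add]
      exact mem_image_of_mem _ (comp_mapsTo S.mapsX (hζ (q + t)).shift hxX)
    · obtain ⟨t, rfl⟩ := Nat.exists_eq_add_of_le hmq
      obtain ⟨z, hz, rfl⟩ := hxξ t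
      rw [comp_add]
      refine ⟨z, hz, ?_⟩
      simp [wcat]
  rw [hcomp, limitSet]
  exact mem_iInter₂.2 fun q _ => image_comp_subset_cylinder (hζ q) (hmem q)

lemma exists_mem_image_comp_of_mem_limitSet {m : ℕ} (hm : 0 < m) {z : Pt d}
    (hz : z ∈ S.limitSet) : ∃ τ ∈ S.words 0 m, z ∈ S.comp 0 m (wext τ) '' S.X := by
  simpa using mem_iInter₂.1 hz m hm

lemma kmax_lt_one {θ : ℝ} (hUCC : S.UCC θ) {m : ℕ} (hm : 0 < m) : S.kmax m < 1 :=
  calc S.kmax m ≤ ∏ k ∈ Finset.Ico 0 m, S.kmaxLv k := by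
        rw [← Finset.range_eq_Ico]; exact S.kmax_le_prod_kmaxLv m
    _ ≤ Real.exp (-θ) ^ (m - 0) := prod_kmaxLv_Ico_le hUCC 0 m
    _ < 1 := pow_lt_one₀ (Real.exp_pos _).le (Real.exp_lt_one_iff.2 (by linarith [hUCC.1]))
        (by omega)

end NCIFS

lemma lt_of_inv_mul_log_two_add_le {θ a : ℝ} (hθ : 0 < θ) (ha : 0 ≤ a) {n m : ℕ}
    (hm : θ⁻¹ * (Real.log 2 + n * (a + θ)) ≤ m) : n < m := by
  rw [inv_mul_le_iff₀ hθ] at hm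
  have : (n : ℝ) < m := by nlinarith [Real.log_pos one_lt_two, n.cast_nonneg (α := ℝ)]
  exact_mod_cast this

lemma exp_neg_pow_le {a b : ℝ} (ha : 0 < a) (hb : 0 < b) {m : ℕ}
    (hm : ⌈-Real.log b / a⌉₊ ≤ m) : Real.exp (-a) ^ m ≤ b := by
  rw [← Real.exp_nat_mul, ← Real.exp_log hb, Real.exp_le_exp]
  have hm' := Nat.ceil_le.1 hm
  rw [div_le_iff₀ ha] at hm'
  linarith

namespace STData

variable {d : ℕ} {E : Type} [DecidableEq E] [Nonempty E] {S : NCIFS d E} (T : STData S)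

omit [Nonempty E] in
lemma wcat_mem {m : ℕ} {τ : Fin m → E} (hτ : τ ∈ S.words 0 m) (j : ℕ) :
    wcat τ (T.ξt m) j ∈ S.I j := by
  by_cases hj : j < m
  · simpa [wcat, hj] using Fintype.mem_piFinset.1 hτ ⟨j, hj⟩
  · simpa [wcat, hj, Nat.add_sub_cancel' (not_lt.1 hj)] using T.ξtmem m (j - m)

omit [Nonempty E] in
lemma radius_eq_prod {n : ℕ} (ω : Fin n → E) :
    T.radius ω =
      ∏ k ∈ Finset.range n, Real.exp (-T.β k fun j => wcat ω (T.ξt n) (k + j)) := by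
  rw [radius, Snβ, ← Finset.sum_neg_distrib, Real.exp_sum]

lemma radius_le_exp_neg_pow_mul_Dw {al au K : ℝ} (hESC : T.ESC al au) (hBDP : S.BDP K)
    {m : ℕ} {τ : Fin m → E} (hτ : τ ∈ S.words 0 m) {x : Pt d} (hx : x ∈ S.X) :
    T.radius τ ≤ Real.exp (-al) ^ m * S.Dw 0 m (wext τ) x := by
  have hterm : ∀ k ∈ Finset.range m, Real.exp (-T.β k fun j => wcat τ (T.ξt m) (k + j)) ≤
      Real.exp (-al) * S.kminLv k := fun k _ => by
    rw [← Real.exp_log (S.kminLv_pos hBDP k), ← Real.exp_add, Real.exp_le_exp]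
    linarith [(hESC.2.2 k _ fun j => T.wcat_mem hτ (k + j)).1]
  calc T.radius τ ≤ ∏ k ∈ Finset.range m, (Real.exp (-al) * S.kminLv k) := by
        rw [radius_eq_prod]
        exact Finset.prod_le_prod (fun _ _ => (Real.exp_pos _).le) hterm
    _ = Real.exp (-al) ^ m * ∏ k ∈ Finset.range m, S.kminLv (0 + k) := by
        simp [Finset.prod_mul_distrib]
    _ ≤ _ := mul_le_mul_of_nonneg_left (NCIFS.prod_kminLv_le_Dw (NCIFS.admissible_wext hτ) hx)
        (by positivity)

omit [Nonempty E] in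
lemma exp_neg_pow_mul_prod_le_radius {al au : ℝ} (hESC : T.ESC al au) {n : ℕ}
    {ω : Fin n → E} (hω : ω ∈ S.words 0 n) :
    Real.exp (-au) ^ n * ∏ k ∈ Finset.range n, S.kmaxLv k ≤ T.radius ω := by
  have hterm : ∀ k ∈ Finset.range n, Real.exp (-au) * S.kmaxLv k ≤
      Real.exp (-T.β k fun j => wcat ω (T.ξt n) (k + j)) := fun k _ => by
    rw [← Real.exp_log (S.kmaxLv_pos k), ← Real.exp_add, Real.exp_le_exp]
    linarith [(hESC.2.2 k _ fun j => T.wcat_mem hω (k + j)).2]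
  calc _ = ∏ k ∈ Finset.range n, (Real.exp (-au) * S.kmaxLv k) := by
        simp [Finset.prod_mul_distrib]
    _ ≤ T.radius ω := by
        rw [radius_eq_prod]
        exact Finset.prod_le_prod (fun k _ => (mul_pos (Real.exp_pos _) (S.kmaxLv_pos k)).le)
          hterm

lemma two_mul_kmax_le_radius {al au θ : ℝ} (hESC : T.ESC al au) (hUCC : S.UCC θ) {n m : ℕ}
    (hm : θ⁻¹ * (Real.log 2 + n * (au + θ)) ≤ m) {ω : Fin n → E}
    (hω : ω ∈ S.words 0 n) :
    2 * S.kmax m ≤ T.radius ω := by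
  have hnm := lt_of_inv_mul_log_two_add_le hUCC.1 (hESC.1.le.trans hESC.2.1) hm
  have htail : 2 * Real.exp (-θ) ^ (m - n) ≤ Real.exp (-au) ^ n := by
    rw [← Real.exp_nat_mul, ← Real.exp_nat_mul, ← Real.exp_log two_pos, ← Real.exp_add,
      Real.exp_le_exp, Nat.cast_sub hnm.le]
    rw [inv_mul_le_iff₀ hUCC.1] at hm
    nlinarith
  calc 2 * S.kmax m ≤ 2 * ((∏ k ∈ Finset.range n, S.kmaxLv k) *
        ∏ k ∈ Finset.Ico n m, S.kmaxLv k) := by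
        rw [Finset.prod_range_mul_prod_Ico _ hnm.le]
        exact mul_le_mul_of_nonneg_left (S.kmax_le_prod_kmaxLv m) two_pos.le
    _ ≤ 2 * ((∏ k ∈ Finset.range n, S.kmaxLv k) * Real.exp (-θ) ^ (m - n)) := by
        gcongr
        · exact Finset.prod_nonneg fun k _ => (S.kmaxLv_pos k).le
        · exact NCIFS.prod_kmaxLv_Ico_le hUCC n m
    _ ≤ Real.exp (-au) ^ n * ∏ k ∈ Finset.range n, S.kmaxLv k := by
        nlinarith [Finset.prod_nonneg fun k (_ : k ∈ Finset.range n) => (S.kmaxLv_pos k).le]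
    _ ≤ T.radius ω := T.exp_neg_pow_mul_prod_le_radius hESC hω

lemma tball_subset_image {al au K ε : ℝ} (hESC : T.ESC al au) (hBDP : S.BDP K) {m : ℕ}
    (hxc : T.xc m ∈ S.Xeps ε) (hm : Real.exp (-al) ^ m ≤ ε / K) {τ : Fin m → E}
    (hτ : τ ∈ S.words 0 m)
    (hgeom : ∀ (x : Pt d) (r : ℝ), ball x r ⊆ S.X →
      ball (S.comp 0 m (wext τ) x) (K⁻¹ * S.normDw 0 m (wext τ) * r) ⊆
        S.comp 0 m (wext τ) '' ball x r) :
    T.tball m τ ⊆ S.comp 0 m (wext τ) '' S.X := by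
  have hball := NCIFS.ball_subset_of_mem_Xeps hxc
  have hεK : 0 ≤ ε / K := (pow_pos (Real.exp_pos _) m).le.trans hm
  have hrad : T.radius τ ≤ K⁻¹ * S.normDw 0 m (wext τ) * ε :=
    calc T.radius τ ≤ Real.exp (-al) ^ m * S.Dw 0 m (wext τ) (T.xc m) :=
          T.radius_le_exp_neg_pow_mul_Dw hESC hBDP hτ (T.xcX m)
      _ ≤ ε / K * S.normDw 0 m (wext τ) := mul_le_mul hm
          (NCIFS.Dw_le_normDw hτ (T.xcX m)) (NCIFS.Dw_pos (NCIFS.admissible_wext hτ)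
            (T.xcX m)).le hεK
      _ = _ := by ring
  exact (ball_subset_ball hrad).trans ((hgeom _ _ hball).trans (image_mono hball))

end STData

section Ahlfors

variable {d : ℕ} {μ : Measure (Pt d)}

lemma msupp_eq_support : msupp μ = μ.support := by
  ext x
  exact (nhds_basis_ball.mem_measureSupport).symm

lemma measure_compl_msupp : μ (msupp μ)ᶜ = 0 := by
  rw [msupp_eq_support]
  exact Measure.measure_compl_support

variable {h C : ℝ}

lemma Ahlfors.measure_le_of_subset_closedBall (hμ : Ahlfors μ h C) {x : Pt d}
    (hx : x ∈ msupp μ) {s : ℝ} (hs : 0 < s) (hs1 : s < 1) {A : Set (Pt d)}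
    (hA : A ⊆ closedBall x s) : μ A ≤ ENNReal.ofReal (C * s ^ h) := by
  have hcont : ContinuousAt (fun t : ℝ => ENNReal.ofReal (C * t ^ h)) s :=
    ENNReal.continuous_ofReal.continuousAt.comp
      (continuousAt_const.mul (Real.continuousAt_rpow_const _ _ (Or.inl hs.ne')))
  refine ge_of_tendsto (hcont.tendsto.mono_left (nhdsWithin_le_nhds (s := Ioi s))) ?_
  filter_upwards [Ioo_mem_nhdsGT hs1] with t ht
  exact (measure_mono (hA.trans (closedBall_subset_ball ht.1))).trans
    (hμ.2 x hx t (hs.trans ht.1) ht.2.le).2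

lemma Ahlfors.le_card_of_cover (hμ : Ahlfors μ h C) {ι : Type*} {F : Finset ι}
    {A : ι → Set (Pt d)} {c : Pt d} (hc : c ∈ msupp μ) {ρ s : ℝ} (hρ : 0 < ρ)
    (hρ1 : ρ ≤ 1)
    (hs : 0 < s) (hs1 : s < 1) (hA : ∀ i ∈ F, ∃ x ∈ msupp μ, A i ⊆ closedBall x s)
    (hcover : msupp μ ∩ ball c ρ ⊆ ⋃ i ∈ F, A i) :
    C⁻¹ ^ 2 * (ρ / s) ^ h ≤ F.card := by
  have hC : 0 < C := one_pos.trans_le hμ.1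
  have hmeas : ENNReal.ofReal (C⁻¹ * ρ ^ h) ≤ ENNReal.ofReal (F.card * (C * s ^ h)) :=
    calc ENNReal.ofReal (C⁻¹ * ρ ^ h) ≤ μ (ball c ρ) := (hμ.2 c hc ρ hρ hρ1).1
      _ ≤ μ (⋃ i ∈ F, A i) := by
        refine measure_mono_ae (Eventually.mono (measure_eq_zero_iff_ae_notMem.1
          measure_compl_msupp) fun z hz hzb => hcover ⟨not_not.1 hz, hzb⟩)
      _ ≤ ∑ i ∈ F, μ (A i) := measure_biUnion_finset_le F A
      _ ≤ ∑ _i ∈ F, ENNReal.ofReal (C * s ^ h) := Finset.sum_le_sum fun i hi => by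
        obtain ⟨x, hx, hAx⟩ := hA i hi
        exact hμ.measure_le_of_subset_closedBall hx hs hs1 hAx
      _ = ENNReal.ofReal (F.card * (C * s ^ h)) := by
        rw [Finset.sum_const, nsmul_eq_mul, ENNReal.ofReal_mul (Nat.cast_nonneg _),
          ENNReal.ofReal_natCast]
  have hreal := (ENNReal.ofReal_le_ofReal_iff (by positivity)).1 hmeas
  rw [Real.div_rpow hρ.le hs.le, ← mul_div_assoc, div_le_iff₀ (by positivity)]
  calc C⁻¹ ^ 2 * ρ ^ h = C⁻¹ * (C⁻¹ * ρ ^ h) := by ring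
    _ ≤ C⁻¹ * (F.card * (C * s ^ h)) := by gcongr
    _ = F.card * s ^ h := by field_simp

end Ahlfors

theorem counting_lower_bound_general {d : ℕ} {E : Type} [DecidableEq E] [Nonempty E]
    (S : NCIFS d E) (T : STData S)
    (al au θ K ε h C : ℝ) (μ : Measure (Pt d))
    (hESC : T.ESC al au) (hUCC : S.UCC θ) (hNEQ : S.NEQ ε)
    (hxc : ∀ n, T.xc n ∈ S.Jlv n ∩ S.Xeps ε)
    (hBDP : S.BDP K)
    (hgeom : ∀ n, ∀ ω ∈ S.words 0 n, ∀ (x : Pt d) (r : ℝ), Metric.ball x r ⊆ S.X →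
      Metric.ball (S.comp 0 n (wext ω) x) (K⁻¹ * S.normDw 0 n (wext ω) * r) ⊆
        S.comp 0 n (wext ω) '' Metric.ball x r)
    (hdiam : Metric.diam S.X ≤ 1)
    (hAhl : Ahlfors μ h C) (hsupp : msupp μ = S.limitSet) :
    ∃ N : ℕ, ∀ n m : ℕ, N ≤ m →
      θ⁻¹ * (Real.log 2 + (n : ℝ) * (au + θ)) ≤ (m : ℝ) →
      ∀ ω ∈ S.words 0 n, T.radius ω ≤ 2 →
        C⁻¹ ^ 2 * (T.radius ω / (2 * S.kmax m)) ^ h ≤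
          (({τ : Fin m → E | τ ∈ S.words 0 m ∧ T.tball m τ ⊆ T.tball n ω}).ncard : ℝ) := by
  classical
  refine ⟨⌈-Real.log (ε / K) / al⌉₊, fun n m hNm hm ω hω hrad => ?_⟩
  have hεK := exp_neg_pow_le hESC.1 (div_pos hNEQ.1 (one_pos.trans_le hBDP.1)) hNm
  have hkmax := T.two_mul_kmax_le_radius hESC hUCC hm hω
  have hm0 : 0 < m := (Nat.zero_le n).trans_lt
    (lt_of_inv_mul_log_two_add_le hUCC.1 (hESC.1.le.trans hESC.2.1) hm)
  have hcentre {k : ℕ} {τ : Fin k → E} (hτ : τ ∈ S.words 0 k) :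
      S.comp 0 k (wext τ) (T.xc k) ∈ msupp μ :=
    hsupp ▸ NCIFS.comp_mem_limitSet hτ (hxc k).1
  let F := (S.words 0 m).filter fun τ => (S.comp 0 m (wext τ) '' S.X ∩
    ball (S.comp 0 n (wext ω) (T.xc n)) (T.radius ω / 2)).Nonempty
  have hcount : C⁻¹ ^ 2 * (T.radius ω / (2 * S.kmax m)) ^ h ≤ F.card := by
    rw [← div_div]
    refine hAhl.le_card_of_cover (A := fun τ => S.comp 0 m (wext τ) '' S.X) (hcentre hω)
      (half_pos (Real.exp_pos _)) (by linarith) (S.kmax_pos m) (NCIFS.kmax_lt_one hUCC hm0)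
      (fun τ hτ => ⟨_, hcentre (Finset.mem_filter.1 hτ).1,
        NCIFS.image_comp_subset_closedBall hdiam (Finset.mem_filter.1 hτ).1 (T.xcX m)⟩) ?_
    rintro z ⟨hzJ, hzc⟩
    obtain ⟨τ, hτ, hzτ⟩ := NCIFS.exists_mem_image_comp_of_mem_limitSet hm0 (hsupp ▸ hzJ)
    exact mem_biUnion (Finset.mem_filter.2 ⟨hτ, z, hzτ, hzc⟩) hzτ
  have hsub : ↑F ⊆ {τ : Fin m → E | τ ∈ S.words 0 m ∧ T.tball m τ ⊆ T.tball n ω} := by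
    intro τ hτF
    obtain ⟨hτ, hmeet⟩ := Finset.mem_filter.1 hτF
    exact ⟨hτ, (T.tball_subset_image hESC hBDP (hxc m).2 hεK hτ (hgeom m τ hτ)).trans
      ((NCIFS.image_comp_subset_ball hdiam hτ hmeet).trans (ball_subset_ball (by linarith)))⟩
  calc _ ≤ (F.card : ℝ) := hcount
    _ ≤ _ := by
      rw [← Set.ncard_coe_finset]
      exact_mod_cast Set.ncard_le_ncard hsub
        ((S.words 0 m).finite_toSet.subset fun τ hτ => hτ.1)

/-- Counting lower bound: under ESC, UCC, NEQ (centers in `J_n ∩ X_ε`),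
BDP with its ball-inclusion consequence, `diam X ≤ 1`, and an `h`-Ahlfors measure with
constant `C` supported exactly on `J`, there is `N` such that for all `n` and all
`m ≥ max(N, θ⁻¹(log 2 + n(ᾱ+θ)))` and every `ω ∈ I^n` with `e^{-S_nβ(ωξ^{(n)})} ≤ 2`,
`#{τ ∈ I^m : B_τ ⊆ B_ω} ≥ C⁻² (e^{-S_nβ(ωξ^{(n)})}/(2κ̄_m))^h`. -/
theorem counting_lower_bound {d : ℕ} {E : Type} [DecidableEq E] [Nonempty E]
    (hd : 1 ≤ d) (S : NCIFS d E) (T : STData S)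
    (al au θ K ε h C : ℝ) (μ : Measure (Pt d))
    (hESC : T.ESC al au) (hUCC : S.UCC θ) (hNEQ : S.NEQ ε)
    (hxc : ∀ n, T.xc n ∈ S.Jlv n ∩ S.Xeps ε)
    (hBDP : S.BDP K)
    (hgeom : ∀ n, ∀ ω ∈ S.words 0 n, ∀ (x : Pt d) (r : ℝ), Metric.ball x r ⊆ S.X →
      Metric.ball (S.comp 0 n (wext ω) x) (K⁻¹ * S.normDw 0 n (wext ω) * r) ⊆
        S.comp 0 n (wext ω) '' Metric.ball x r)
    (hdiam : Metric.diam S.X ≤ 1) (hh : 0 < h)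
    (hAhl : Ahlfors μ h C) (hsupp : msupp μ = S.limitSet) :
    ∃ N : ℕ, ∀ n m : ℕ, N ≤ m →
      θ⁻¹ * (Real.log 2 + (n : ℝ) * (au + θ)) ≤ (m : ℝ) →
      ∀ ω ∈ S.words 0 n, T.radius ω ≤ 2 →
        C⁻¹ ^ 2 * (T.radius ω / (2 * S.kmax m)) ^ h ≤
          (({τ : Fin m → E | τ ∈ S.words 0 m ∧ T.tball m τ ⊆ T.tball n ω}).ncard : ℝ) :=
  counting_lower_bound_general S T al au θ K ε h C μ hESC hUCC hNEQ hxc hBDP hgeom hdiam hAhl hsupp
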